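/- Under the Lazy Set axioms A0–A2, if X ⇒ Y ⇒ Z and X is a Cnt event, then Begin(X) < End(Z). -/

import Mathlib

/-- Event type: Add, Rem, or Contains. -/
inductive EType | add | rem | cnt
deriving DecidableEq

/-- Status of an event: 0, 1, or f (failed). -/
inductive Status | s0 | s1 | sf
deriving DecidableEq

open EType Status

/-- A Tarskian system execution satisfying the Lazy Set axioms A0–A2.
Events are typed Add/Rem/Cnt; Add and Rem events are actions (with
Begin(E) = End(E) = E) and the actions are linearly ordered by the temporal
precedence relation `lt`; Cnt events are high-level with Begin(E) < End(E);
`γ` is defined on the Op¹ events and satisfies axioms A1 and A2. -/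
structure LazySys where
  E : Type
  lt : E → E → Prop
  typ : E → EType
  χ : E → Status
  kval : E → ℕ
  Begin : E → E
  End' : E → E
  γ : E → E
  action : E → Prop
  lt_irrefl : ∀ e, ¬ lt e e
  lt_trans : ∀ a b c, lt a b → lt b c → lt a c
  act_lin : ∀ a b, action a → action b → a ≠ b → lt a b ∨ lt b a
  addRem_action : ∀ e, typ e ≠ EType.cnt →
    action e ∧ Begin e = e ∧ End' e = e
  begin_end_action : ∀ e, action (Begin e) ∧ action (End' e)
  cnt_interval : ∀ e, typ e = EType.cnt → lt (Begin e) (End' e)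
  lt_iff : ∀ a b, lt a b ↔ lt (End' a) (Begin b)
  A1 : ∀ A, χ A = Status.s1 →
    typ (γ A) = EType.add ∧ χ (γ A) = Status.s0 ∧ kval (γ A) = kval A ∧
    lt (γ A) (End' A) ∧
    ¬ ∃ R, typ R = EType.rem ∧ χ R = Status.s1 ∧ γ R = γ A ∧
      lt (γ A) R ∧ lt R A
  A2 : ∀ A B, typ A = EType.add → χ A = Status.s0 → χ B = Status.s0 →
    lt A B → kval A = kval B →
    ∃ R, typ R = EType.rem ∧ χ R = Status.s1 ∧ γ R = A ∧ lt R (End' B)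

/-- The auxiliary relation ⇒ used in the linearization proof. -/
def LazySys.arrow (S : LazySys) (X Y : S.E) : Prop :=
  (S.typ Y = EType.cnt ∧ S.χ Y = Status.s1 ∧ X = S.γ Y) ∨
  (S.typ X = EType.cnt ∧ S.χ X = Status.s1 ∧
    S.typ Y = EType.rem ∧ S.χ Y = Status.s1 ∧ S.γ Y = S.γ X) ∨
  (S.typ X = EType.rem ∧ S.χ X = Status.s1 ∧
    S.typ Y = EType.cnt ∧ S.χ Y = Status.s0 ∧
    S.kval X = S.kval Y ∧ ¬ S.lt Y X ∧ S.lt (S.γ X) Y) ∨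
  (S.typ X = EType.cnt ∧ S.χ X = Status.s0 ∧
    S.typ Y = EType.add ∧ S.χ Y = Status.s0 ∧
    S.kval X = S.kval Y ∧ ¬ S.lt Y X)

/-!
Both chains X ⇒ Y ⇒ Z starting at a Cnt event X reduce to one pattern: an action `e` with
`¬ e < X` and `e < End(Z)`. Since `e` is its own end, `¬ e < X` means `¬ e < Begin(X)`, so
`Begin(X) ≤ e` by linearity of the actions, and hence `Begin(X) < End(Z)`.

If X is Cnt⁰, then Y is an Add⁰ event with `¬ Y < X`, and `Y ⇒ Z` forces `Y = γ(Z)`, which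
precedes `End(Z)` by A1; take `e = Y`. If X is Cnt¹, then Y is a Rem¹ event sharing `γ` with X,
and `Y ⇒ Z` makes Z a Cnt⁰ event with the same key and `γ(Y) < Z`; A2 then yields a Rem¹ event
`R` with `γ(R) = γ(X)` and `R < End(Z)`, and A1 for X forbids `R < X`; take `e = R`.
-/

namespace LazySys

variable (S : LazySys)

theorem typ_gamma {A : S.E} (hA : S.χ A = s1) : S.typ (S.γ A) = add :=
  (S.A1 A hA).1

theorem begin_lt_of_not_lt_of_lt {X e c : S.E} (he : S.typ e ≠ cnt) (hnot : ¬ S.lt e X)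
    (hlt : S.lt e c) : S.lt (S.Begin X) c := by
  obtain ⟨he_act, -, he_end⟩ := S.addRem_action e he
  have hnot' : ¬ S.lt e (S.Begin X) := by rwa [S.lt_iff, he_end] at hnot
  by_cases heq : S.Begin X = e
  · rwa [heq]
  · rcases S.act_lin _ _ (S.begin_end_action X).1 he_act heq with h | h
    · exact S.lt_trans _ _ _ h hlt
    · exact absurd h hnot'

theorem gamma_lt_self {R : S.E} (hR : S.typ R ≠ cnt) (hR1 : S.χ R = s1) :
    S.lt (S.γ R) R := by
  simpa only [(S.addRem_action R hR).2.2] using (S.A1 R hR1).2.2.2.1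

theorem not_lt_of_gamma_eq {X R : S.E} (hX1 : S.χ X = s1) (hR : S.typ R = rem)
    (hR1 : S.χ R = s1) (hγ : S.γ R = S.γ X) : ¬ S.lt R X := fun hRX =>
  (S.A1 X hX1).2.2.2.2 ⟨R, hR, hR1, hγ, hγ ▸ S.gamma_lt_self (by simp [hR]) hR1, hRX⟩

theorem exists_rem_lt_end {Y Z : S.E} (hY1 : S.χ Y = s1) (hZ0 : S.χ Z = s0)
    (hk : S.kval Y = S.kval Z) (hγZ : S.lt (S.γ Y) Z) :
    ∃ R, S.typ R = rem ∧ S.χ R = s1 ∧ S.γ R = S.γ Y ∧ S.lt R (S.End' Z) := by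
  obtain ⟨hadd, hs0, hkγ, -⟩ := S.A1 Y hY1
  exact S.A2 _ Z hadd hs0 hZ0 hγZ (hkγ.trans hk)

theorem arrow_of_typ_cnt {X Y : S.E} (h : S.arrow X Y) (hX : S.typ X = cnt) :
    (S.χ X = s1 ∧ S.typ Y = rem ∧ S.χ Y = s1 ∧ S.γ Y = S.γ X) ∨
      (S.typ Y = add ∧ ¬ S.lt Y X) := by
  rcases h with ⟨-, hY1, rfl⟩ | ⟨-, hX1, hY, hY1, hγ⟩ | ⟨hXr, -⟩ | ⟨-, -, hY, -, -, hYX⟩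
  · simp [S.typ_gamma hY1] at hX
  · exact Or.inl ⟨hX1, hY, hY1, hγ⟩
  · simp [hX] at hXr
  · exact Or.inr ⟨hY, hYX⟩

theorem arrow_of_typ_rem {Y Z : S.E} (h : S.arrow Y Z) (hY : S.typ Y = rem) :
    S.χ Z = s0 ∧ S.kval Y = S.kval Z ∧ S.lt (S.γ Y) Z := by
  rcases h with ⟨-, hZ1, rfl⟩ | ⟨hYc, -⟩ | ⟨-, -, -, hZ0, hk, -, hγZ⟩ | ⟨hYc, -⟩
  · simp [S.typ_gamma hZ1] at hY
  · simp [hY] at hYc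
  · exact ⟨hZ0, hk, hγZ⟩
  · simp [hY] at hYc

theorem arrow_of_typ_add {Y Z : S.E} (h : S.arrow Y Z) (hY : S.typ Y = add) :
    S.χ Z = s1 ∧ Y = S.γ Z := by
  rcases h with ⟨-, hZ1, hYZ⟩ | ⟨hYc, -⟩ | ⟨hYr, -⟩ | ⟨hYc, -⟩
  · exact ⟨hZ1, hYZ⟩
  · simp [hY] at hYc
  · simp [hY] at hYr
  · simp [hY] at hYc

end LazySys

/-- Under the Lazy Set axioms A0–A2, if X ⇒ Y ⇒ Z and X is a
Cnt event, then Begin(X) < End(Z). -/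
theorem stmt9 (S : LazySys) :
    ∀ X Y Z : S.E, S.arrow X Y → S.arrow Y Z → S.typ X = cnt →
      S.lt (S.Begin X) (S.End' Z) := by
  intro X Y Z hXY hYZ hX
  rcases S.arrow_of_typ_cnt hXY hX with ⟨hX1, hY, hY1, hγ⟩ | ⟨hY, hYX⟩
  · obtain ⟨hZ0, hk, hγZ⟩ := S.arrow_of_typ_rem hYZ hY
    obtain ⟨R, hR, hR1, hRγ, hRZ⟩ := S.exists_rem_lt_end hY1 hZ0 hk hγZ
    exact S.begin_lt_of_not_lt_of_lt (by simp [hR])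
      (S.not_lt_of_gamma_eq hX1 hR hR1 (hRγ.trans hγ)) hRZ
  · obtain ⟨hZ1, rfl⟩ := S.arrow_of_typ_add hYZ hY
    exact S.begin_lt_of_not_lt_of_lt (by simp [hY]) hYX (S.A1 Z hZ1).2.2.2.1
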